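/- (Lemma 1 on the Toda lattice.) Let a > 0, let u(n,r,θ) be smooth in (r,θ) for each n ∈ ℤ, let g : ℝ → ℂ be differentiable and k : ℤ → ℂ, and assume the boundary condition u(n,a,θ) = 2inθ + g(θ) + k(n) for all n ∈ ℤ and θ ∈ ℝ. If φ₁ : ℤ × ℝ → ℂ (differentiable in θ) satisfies equation (V1), then the function φ₂(n,θ) = e^{2inθ + g(θ)}·φ₁(n,θ) satisfies equation (V2). -/

import Mathlib

/-!
Multiplying a solution of (V1) by `E_n(θ) = e^{2inθ + g(θ)}` adds the logarithmic derivative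
`2in + g'(θ) = u_θ(n,a,θ)` to the diagonal coefficient, which flips the sign of its `u_θ` term;
and since `E_{n±1} = e^{±2iθ} E_n`, it exchanges `e^{iθ}` and `e^{-iθ}` in the off-diagonal terms.
-/

/-- The radial partial derivative `u_r(n, a, θ)`. -/
noncomputable def uR (u : ℤ → ℝ → ℝ → ℂ) (a : ℝ) (n : ℤ) (θ : ℝ) : ℂ :=
  deriv (fun r : ℝ => u n r θ) a

/-- The angular partial derivative `u_θ(n, a, θ)`. -/
noncomputable def uT (u : ℤ → ℝ → ℝ → ℂ) (a : ℝ) (n : ℤ) (θ : ℝ) : ℂ :=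
  deriv (fun t : ℝ => u n a t) θ

/-- `ω(n, a, θ) = exp(u(n,a,θ) − u(n+1,a,θ))`. -/
noncomputable def om (u : ℤ → ℝ → ℝ → ℂ) (a : ℝ) (n : ℤ) (θ : ℝ) : ℂ :=
  Complex.exp (u n a θ - u (n + 1) a θ)

/-- `u(n,·,·)` is smooth in `(r,θ)` on `{r > 0}` for every `n`. -/
def SmoothOnHalf (u : ℤ → ℝ → ℝ → ℂ) : Prop :=
  ∀ n : ℤ, ContDiffOn ℝ (⊤ : ℕ∞) (fun p : ℝ × ℝ => u n p.1 p.2) {p : ℝ × ℝ | 0 < p.1}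

/-- Equation (V1): the θ-part, restricted to `r = a`, of the original Lax pair of the
polar two-dimensional Toda lattice. -/
def V1 (a : ℝ) (u : ℤ → ℝ → ℝ → ℂ) (φ : ℤ → ℝ → ℂ) : Prop :=
  ∀ (n : ℤ) (θ : ℝ), HasDerivAt (φ n)
    (Complex.I * a * Complex.exp (Complex.I * θ) / 2 * φ (n + 1) θ
      - Complex.I * a / 2 * (uR u a n θ - Complex.I / a * uT u a n θ) * φ n θ
      + Complex.I * a * Complex.exp (-(Complex.I * θ)) / 2 * om u a (n - 1) θ * φ (n - 1) θ) θ

/-- Equation (V2): the θ-part, restricted to `r = a`, of the Lax pair obtained from the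
reflection `θ → −θ`. -/
def V2 (a : ℝ) (u : ℤ → ℝ → ℝ → ℂ) (φ : ℤ → ℝ → ℂ) : Prop :=
  ∀ (n : ℤ) (θ : ℝ), HasDerivAt (φ n)
    (Complex.I * a * Complex.exp (-(Complex.I * θ)) / 2 * φ (n + 1) θ
      - Complex.I * a / 2 * (uR u a n θ + Complex.I / a * uT u a n θ) * φ n θ
      + Complex.I * a * Complex.exp (Complex.I * θ) / 2 * om u a (n - 1) θ * φ (n - 1) θ) θ

/-- Equation (V3): the θ-part, restricted to `r = a`, of the Lax pair obtained from the
Kelvin transformation. -/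
def V3 (a : ℝ) (u : ℤ → ℝ → ℝ → ℂ) (φ : ℤ → ℝ → ℂ) : Prop :=
  ∀ (n : ℤ) (θ : ℝ), HasDerivAt (φ n)
    (Complex.I * a * Complex.exp (Complex.I * θ) / 2 * φ (n + 1) θ
      - Complex.I * a / 2 * (-uR u a n θ + 4 * n / a - Complex.I / a * uT u a n θ) * φ n θ
      + Complex.I * a * Complex.exp (-(Complex.I * θ)) / 2 * om u a (n - 1) θ * φ (n - 1) θ) θ

/-- Equation (V4): the θ-part, restricted to `r = a`, of the Lax pair obtained from the
reflection `ũ(n) = −u(−n)`. -/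
def V4 (a : ℝ) (u : ℤ → ℝ → ℝ → ℂ) (φ : ℤ → ℝ → ℂ) : Prop :=
  ∀ (n : ℤ) (θ : ℝ), HasDerivAt (φ n)
    (Complex.I * a * Complex.exp (Complex.I * θ) / 2 * φ (n - 1) θ
      - Complex.I * a / 2 * (-uR u a n θ + Complex.I / a * uT u a n θ) * φ n θ
      + Complex.I * a * Complex.exp (-(Complex.I * θ)) / 2 * om u a n θ * φ (n + 1) θ) θ

open Complex

noncomputable def gaugeFactor (g : ℝ → ℂ) (n : ℤ) (θ : ℝ) : ℂ :=
  exp (2 * I * n * θ + g θ)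

theorem hasDerivAt_boundaryPhase {g : ℝ → ℂ} {θ : ℝ} (hg : DifferentiableAt ℝ g θ) (n : ℤ) :
    HasDerivAt (fun t : ℝ => 2 * I * n * t + g t) (2 * I * n + deriv g θ) θ := by
  have hθ : HasDerivAt (fun t : ℝ => (t : ℂ)) 1 θ := (hasDerivAt_id θ).ofReal_comp
  have h := (hθ.const_mul (2 * I * n)).add hg.hasDerivAt
  rwa [mul_one] at h

theorem hasDerivAt_gaugeFactor {g : ℝ → ℂ} {θ : ℝ} (hg : DifferentiableAt ℝ g θ) (n : ℤ) :
    HasDerivAt (gaugeFactor g n) (gaugeFactor g n θ * (2 * I * n + deriv g θ)) θ :=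
  (hasDerivAt_boundaryPhase hg n).cexp

theorem uT_eq_of_boundary {u : ℤ → ℝ → ℝ → ℂ} {a : ℝ} {g : ℝ → ℂ} {k : ℤ → ℂ} {n : ℤ} {θ : ℝ}
    (hg : DifferentiableAt ℝ g θ) (hbc : ∀ t : ℝ, u n a t = 2 * I * n * t + g t + k n) :
    uT u a n θ = 2 * I * n + deriv g θ := by
  simp only [uT, hbc]
  exact ((hasDerivAt_boundaryPhase hg n).add_const (k n)).deriv

theorem exp_mul_gaugeFactor_eq_succ (g : ℝ → ℂ) (n : ℤ) (θ : ℝ) :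
    exp (I * θ) * gaugeFactor g n θ = exp (-(I * θ)) * gaugeFactor g (n + 1) θ := by
  simp only [gaugeFactor, ← exp_add]
  push_cast
  ring_nf

theorem exp_neg_mul_gaugeFactor_eq_pred (g : ℝ → ℂ) (n : ℤ) (θ : ℝ) :
    exp (-(I * θ)) * gaugeFactor g n θ = exp (I * θ) * gaugeFactor g (n - 1) θ := by
  simp only [gaugeFactor, ← exp_add]
  push_cast
  ring_nf

theorem add_diag_V1_eq_diag_V2 {a : ℂ} (ha : a ≠ 0) (R T : ℂ) :
    T - I * a / 2 * (R - I / a * T) = -(I * a / 2 * (R + I / a * T)) := by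
  have hI : I * a / 2 * (I / a * T) = -(T / 2) := by
    field_simp
    linear_combination T * I_sq
  linear_combination 2 * hI

theorem toda_lemma1_general (a : ℝ) (ha : 0 < a) (u : ℤ → ℝ → ℝ → ℂ)
    (g : ℝ → ℂ) (hg : Differentiable ℝ g) (k : ℤ → ℂ)
    (hbc : ∀ (n : ℤ) (θ : ℝ), u n a θ = 2 * Complex.I * n * θ + g θ + k n)
    (φ₁ : ℤ → ℝ → ℂ) (hφ₁ : V1 a u φ₁) :
    V2 a u (fun n θ => Complex.exp (2 * Complex.I * n * θ + g θ) * φ₁ n θ) := by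
  show V2 a u (fun n θ => gaugeFactor g n θ * φ₁ n θ)
  intro n θ
  refine ((hasDerivAt_gaugeFactor (hg θ) n).mul (hφ₁ n θ)).congr_deriv ?_
  have hdiag := add_diag_V1_eq_diag_V2 (ofReal_ne_zero.mpr ha.ne') (uR u a n θ) (uT u a n θ)
  rw [uT_eq_of_boundary (hg θ) (hbc n)] at hdiag ⊢
  linear_combination gaugeFactor g n θ * φ₁ n θ * hdiag
    + I * a / 2 * φ₁ (n + 1) θ * exp_mul_gaugeFactor_eq_succ g n θ
    + I * a / 2 * om u a (n - 1) θ * φ₁ (n - 1) θ * exp_neg_mul_gaugeFactor_eq_pred g n θ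

/-- Lemma 1 on the Toda lattice: under the boundary condition
`u(n,a,θ) = 2inθ + g(θ) + k(n)`, if `φ₁` solves (V1) then
`φ₂(n,θ) = e^{2inθ + g(θ)} φ₁(n,θ)` solves (V2). -/
theorem toda_lemma1 (a : ℝ) (ha : 0 < a) (u : ℤ → ℝ → ℝ → ℂ) (hu : SmoothOnHalf u)
    (g : ℝ → ℂ) (hg : Differentiable ℝ g) (k : ℤ → ℂ)
    (hbc : ∀ (n : ℤ) (θ : ℝ), u n a θ = 2 * Complex.I * n * θ + g θ + k n)
    (φ₁ : ℤ → ℝ → ℂ) (hφ₁ : V1 a u φ₁) :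
    V2 a u (fun n θ => Complex.exp (2 * Complex.I * n * θ + g θ) * φ₁ n θ) :=
  toda_lemma1_general a ha u g hg k hbc φ₁ hφ₁
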